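/- For all integers k ≥ 2 and Q ≥ 2 there exists a positive integer D, depending only on k and Q, with the following property: for every positive integer N with Ω(N) ≤ k, for every finite field F with 2 ≤ |F| < Q, and for every positive integer m divisible by D, every element z of the center of SL_m(F) is an N-th power in SL_m(F), i.e. z = h^N for some h ∈ SL_m(F). -/

import Mathlib

/-!
A central element of `SL_m(F)` is a nonzero scalar `c`. Split `N = N₁ * N₂`, where the prime
factors of `N₁` divide `q - 1` and `N₂` is coprime to `q - 1`, with `q = |F|`. Then
`N₁ ≤ (q - 1) ^ Ω(N)` is bounded in terms of `k` and `Q`, and `c = μ ^ N₂` for some `μ ≠ 0`.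
The matrix `A` of multiplication by `X` on `F[X] ⧸ (X ^ N₁ - μ)` satisfies `A ^ N₁ = μ` and
`det A = ±μ`, so `r` diagonal copies of `A` with `2 (q - 1) ∣ r` lie in `SL_{N₁ r}(F)`. Hence any
`D` divisible by all `2 n (q - 1)` with `n ≤ Q ^ k` and `q < Q`, such as `(2 Q ^ (k + 1))!`, works.
-/

open Matrix Polynomial

theorem Nat.exists_mul_eq_le_pow_length_coprime {N : ℕ} (hN : N ≠ 0) {c : ℕ} (hc : 0 < c) :
    ∃ N₁ N₂ : ℕ, N₁ * N₂ = N ∧ N₁ ≤ c ^ N.primeFactorsList.length ∧ N₂.Coprime c := by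
  set l := N.primeFactorsList
  refine ⟨(l.filter (· ∣ c)).prod, (l.filter fun p => ¬p ∣ c).prod, ?_, ?_, ?_⟩
  · simpa using (l.prod_map_filter_mul_prod_map_filter_not (· ∣ c) id).trans
      (by simpa using Nat.prod_primeFactorsList hN)
  · calc (l.filter (· ∣ c)).prod ≤ c ^ (l.filter (· ∣ c)).length :=
          List.prod_le_pow_card _ _ fun p hp =>
            Nat.le_of_dvd hc (by simpa using List.of_mem_filter hp)
      _ ≤ c ^ l.length := Nat.pow_le_pow_right hc (List.length_filter_le _ _)
  · refine Nat.coprime_list_prod_left_iff.2 fun p hp => ?_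
    exact (Nat.prime_of_mem_primeFactorsList (List.mem_of_mem_filter hp)).coprime_iff_not_dvd.2
      (by simpa using List.of_mem_filter hp)

theorem exists_pow_eq_of_coprime_orderOf {M : Type*} [Monoid M] {x : M} {n : ℕ}
    (h : n.Coprime (orderOf x)) : ∃ y : M, y ^ n = x := by
  obtain ⟨k, hk⟩ := exists_pow_eq_self_of_coprime h
  exact ⟨x ^ k, by rw [← pow_mul, mul_comm, pow_mul, hk]⟩

theorem Matrix.exists_pow_eq_smul_one_det_eq {K : Type*} [Field K] {n : ℕ} (hn : n ≠ 0) (μ : K) :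
    ∃ A : Matrix (Fin n) (Fin n) K, A ^ n = μ • 1 ∧ A.det = -(-1) ^ n * μ := by
  set f : K[X] := X ^ n - C μ
  have hf : f.Monic := monic_X_pow_sub_C μ hn
  set pb := AdjoinRoot.powerBasis hf.ne_zero
  have hdim : pb.dim = n := natDegree_X_pow_sub_C
  let φ := (reindexAlgEquiv K K (finCongr hdim)).toAlgHom.comp (Algebra.leftMulMatrix pb.basis)
  refine ⟨φ pb.gen, ?_, ?_⟩
  · have : pb.gen ^ n = algebraMap K _ μ := by
      simpa [pb, f, sub_eq_zero] using AdjoinRoot.eval₂_root f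
    rw [← map_pow, this, AlgHom.commutes, Algebra.algebraMap_eq_smul_one]
  · have := Algebra.PowerBasis.norm_gen_eq_coeff_zero_minpoly pb
    rw [AdjoinRoot.minpoly_powerBasis_gen_of_monic hf, hdim,
      Algebra.norm_eq_matrix_det pb.basis] at this
    simp [φ, this, f, Ne.symm hn]

theorem Matrix.SpecialLinearGroup.exists_pow_eq_scalar {K : Type*} [Field K] {n r m : ℕ}
    (hn : n ≠ 0) (hm : n * r = m) (hr : Even r) {μ : K} (hμ : μ ^ r = 1) :
    ∃ H : SpecialLinearGroup (Fin m) K, ((H ^ n : SpecialLinearGroup (Fin m) K) :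
      Matrix (Fin m) (Fin m) K) = scalar (Fin m) μ := by
  obtain ⟨A, hApow, hAdet⟩ := exists_pow_eq_smul_one_det_eq hn μ
  let e : Fin n × Fin r ≃ Fin m := finProdFinEquiv.trans (finCongr hm)
  let B := reindexAlgEquiv K K e (blockDiagonal fun _ => A)
  have hBdet : B.det = 1 := by
    simp only [B]
    rw [coe_reindexAlgEquiv, det_reindex_self, det_blockDiagonal, Finset.prod_const,
      Finset.card_univ, Fintype.card_fin, hAdet, neg_mul, hr.neg_pow, mul_pow, ← pow_mul,
      mul_comm n, pow_mul, hr.neg_one_pow, one_pow, one_mul, hμ]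
  let H : SpecialLinearGroup (Fin m) K := ⟨B, hBdet⟩
  refine ⟨H, ?_⟩
  rw [SpecialLinearGroup.coe_pow]
  change B ^ n = _
  have hpow : (fun _ : Fin r => A) ^ n = μ • 1 := funext fun _ => by simp [hApow]
  rw [← map_pow, ← blockDiagonal_pow, hpow, blockDiagonal_smul, blockDiagonal_one, map_smul,
    map_one, scalar_apply, smul_one_eq_diagonal]

theorem FiniteField.exists_pow_eq_of_coprime {K : Type*} [Field K] [Fintype K] {n : ℕ}
    (hn : n.Coprime (Fintype.card K - 1)) {x : K} (hx : x ≠ 0) : ∃ y : K, y ^ n = x :=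
  exists_pow_eq_of_coprime_orderOf <|
    hn.coprime_dvd_right (orderOf_dvd_of_pow_eq_one (pow_card_sub_one_eq_one x hx))

theorem Matrix.SpecialLinearGroup.exists_pow_eq_scalar_of_dvd {K : Type*} [Field K] [Fintype K]
    {n m : ℕ} (hn : n ≠ 0) (hm : 2 * n * (Fintype.card K - 1) ∣ m) {μ : K} (hμ : μ ≠ 0) :
    ∃ H : SpecialLinearGroup (Fin m) K, ((H ^ n : SpecialLinearGroup (Fin m) K) :
      Matrix (Fin m) (Fin m) K) = scalar (Fin m) μ := by
  obtain ⟨s, rfl⟩ := hm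
  refine exists_pow_eq_scalar (r := (Fintype.card K - 1) * (2 * s)) hn (by ring)
    ((even_two_mul s).mul_left _) ?_
  rw [pow_mul, FiniteField.pow_card_sub_one_eq_one μ hμ, one_pow]

theorem stmt_18_general (k Q : ℕ) :
    ∃ D : ℕ, 0 < D ∧ ∀ N : ℕ, 0 < N → N.primeFactorsList.length ≤ k →
      ∀ (F : Type) [Field F] [Fintype F], 2 ≤ Fintype.card F → Fintype.card F < Q →
      ∀ m : ℕ, 0 < m → D ∣ m →
      ∀ z ∈ Subgroup.center (Matrix.SpecialLinearGroup (Fin m) F),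
        ∃ h : Matrix.SpecialLinearGroup (Fin m) F, h ^ N = z := by
  refine ⟨(2 * Q ^ (k + 1)).factorial, Nat.factorial_pos _, ?_⟩
  intro N hN hΩ F _ _ hF2 hFQ m hm hDm z hz
  obtain ⟨c, hcm, hcz⟩ := Matrix.SpecialLinearGroup.mem_center_iff.mp hz
  have hc : c ≠ 0 := by
    rintro rfl
    simp [Fintype.card_fin, hm.ne'] at hcm
  obtain ⟨N₁, N₂, rfl, hN₁, hN₂⟩ :=
    Nat.exists_mul_eq_le_pow_length_coprime hN.ne' (c := Fintype.card F - 1) (by omega)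
  obtain ⟨μ, rfl⟩ := FiniteField.exists_pow_eq_of_coprime hN₂ hc
  have hN₁0 : N₁ ≠ 0 := left_ne_zero_of_mul hN.ne'
  have hN₁Q : N₁ ≤ Q ^ k :=
    hN₁.trans ((Nat.pow_le_pow_right (by omega) hΩ).trans (Nat.pow_le_pow_left (by omega) k))
  have hdvd : 2 * N₁ * (Fintype.card F - 1) ∣ m := by
    refine (Nat.dvd_factorial (Nat.mul_pos (by omega) (by omega)) ?_).trans hDm
    rw [pow_succ, ← mul_assoc]
    exact Nat.mul_le_mul (Nat.mul_le_mul_left 2 hN₁Q) (by omega)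
  obtain ⟨H, hH⟩ := Matrix.SpecialLinearGroup.exists_pow_eq_scalar_of_dvd hN₁0 hdvd
    (ne_zero_pow (right_ne_zero_of_mul hN.ne') hc)
  refine ⟨H, Subtype.ext ?_⟩
  rw [pow_mul, Matrix.SpecialLinearGroup.coe_pow, hH, ← hcz, map_pow]

/-- For all `k, Q ≥ 2` there is `D = D(k, Q)` such that for every `N` with `Ω(N) ≤ k`
and every finite field `F` with `2 ≤ |F| < Q`, every central element of `SL_m(F)` is an
`N`-th power whenever `D ∣ m`. -/
theorem stmt_18 (k Q : ℕ) (hk : 2 ≤ k) (hQ : 2 ≤ Q) :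
    ∃ D : ℕ, 0 < D ∧ ∀ N : ℕ, 0 < N → N.primeFactorsList.length ≤ k →
      ∀ (F : Type) [Field F] [Fintype F], 2 ≤ Fintype.card F → Fintype.card F < Q →
      ∀ m : ℕ, 0 < m → D ∣ m →
      ∀ z ∈ Subgroup.center (Matrix.SpecialLinearGroup (Fin m) F),
        ∃ h : Matrix.SpecialLinearGroup (Fin m) F, h ^ N = z :=
  stmt_18_general k Q
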